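/- For every E0 > 0 and every C > 0 there exists γ0 > 0 such that for all γ ∈ (0, γ0) and all μ ∈ (0, Cγ], the transition system (A)–(B) has at most one solution (q, ν) with ν > 0 and −1 < q ≤ 0. -/

import Mathlib

open Filter

/-- The unique positive root of `ε² + (E0+4)ε - γ² = 0`. -/
noncomputable def epsPar (E0 γ : ℝ) : ℝ :=
  (-(E0 + 4) + Real.sqrt ((E0 + 4)^2 + 4 * γ^2)) / 2

/-- `E1 = E0 + ε`. -/
noncomputable def E1Par (E0 γ : ℝ) : ℝ := E0 + epsPar E0 γ

/-- `a = 4 + E0 + ε`. -/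
noncomputable def aPar (E0 γ : ℝ) : ℝ := 4 + E0 + epsPar E0 γ

/-- Equation (A) of the transition system:
`(1-q)(1+q) = 12γ⁴ / (ν² (ν+E1) (ν+a+ε)²)`. -/
def EqA (E0 γ q ν : ℝ) : Prop :=
  (1 - q) * (1 + q) =
    12 * γ^4 / (ν^2 * (ν + E1Par E0 γ) * (ν + aPar E0 γ + epsPar E0 γ)^2)

/-- Equation (B) of the transition system:
`(2+q)²/(1+q) = (9/2)(μ/γ²)(ν+a)²(ν+E1)/(ν(ν+a+ε))`. -/
def EqB (E0 γ μ q ν : ℝ) : Prop :=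
  (2 + q)^2 / (1 + q) =
    (9/2) * (μ / γ^2) * ((ν + aPar E0 γ)^2 * (ν + E1Par E0 γ)) /
      (ν * (ν + aPar E0 γ + epsPar E0 γ))

/-!
For `q ≤ 0` put `u = -q ∈ [0, 1)` and `D(ν) = ν²(ν+E1)(ν+a+ε)²` (`denomA`). Equation (A) reads
`(1 - u²) D(ν) = 12γ⁴`, and (A) and (B) together give `(2-u)²(1+u) ν³(ν+a+ε)³/(ν+a)² = 54γ²μ`.
The fourth power of the second relation divided by the cube of the first separates the variables:
`k(u) R(ν) = (54γ²μ)⁴/(12γ⁴)³` with `k(u) = (2-u)⁸(1+u)/(1-u)³` (`uFactor`) and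
`R(ν) = ν⁶(ν+a+ε)⁶/((ν+a)⁸(ν+E1)³)` (`nuFactor`). Both `k` and `R` are strictly increasing, the
latter as soon as `5ε ≤ 4a`, which holds for small `γ`; and by (A) a larger `ν` forces a larger
`u`. So two solutions with different `ν` would give different values of `k(u) R(ν)`.
-/

open Set

noncomputable def uFactor (u : ℝ) : ℝ := (2 - u)^8 * (1 + u) / (1 - u)^3

noncomputable def nuFactor (a b e ν : ℝ) : ℝ :=
  ν^6 * (ν + a + e)^6 / ((ν + a)^8 * (ν + b)^3)

noncomputable def denomA (a b e ν : ℝ) : ℝ := ν^2 * (ν + b) * (ν + a + e)^2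

theorem strictMonoOn_of_hasDerivAt_pos {D : Set ℝ} (hD : Convex ℝ D) {f f' : ℝ → ℝ}
    (hf : ∀ x ∈ D, HasDerivAt f (f' x) x) (hf' : ∀ x ∈ interior D, 0 < f' x) :
    StrictMonoOn f D :=
  strictMonoOn_of_deriv_pos hD (fun x hx => (hf x hx).continuousAt.continuousWithinAt)
    fun x hx => (hf x (interior_subset hx)).deriv ▸ hf' x hx

section Factors

variable {a b e u ν : ℝ}

theorem uFactor_pos (h₀ : -1 < u) (h₁ : u < 1) : 0 < uFactor u :=
  div_pos (mul_pos (pow_pos (by linarith) 8) (by linarith)) (pow_pos (by linarith) 3)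

theorem hasDerivAt_uFactor (hu : u ≠ 1) :
    HasDerivAt uFactor (6 * u^2 * (2 - u)^7 / (1 - u)^4) u := by
  have h1u : 1 - u ≠ 0 := sub_ne_zero.2 hu.symm
  have h := ((((hasDerivAt_id' u).const_sub 2).pow 8).mul ((hasDerivAt_id' u).const_add 1)).div
    (((hasDerivAt_id' u).const_sub 1).pow 3) (pow_ne_zero 3 h1u)
  refine h.congr_deriv ?_
  simp only [Pi.pow_apply, Pi.mul_apply]
  field_simp
  ring

theorem uFactor_strictMonoOn : StrictMonoOn uFactor (Ico 0 1) :=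
  strictMonoOn_of_hasDerivAt_pos (convex_Ico 0 1) (fun _ hu => hasDerivAt_uFactor hu.2.ne)
    fun u hu => by
      obtain ⟨hu₀, hu₁⟩ : 0 < u ∧ u < 1 := by rwa [interior_Ico] at hu
      have : 0 < 1 - u := sub_pos.2 hu₁
      have : 0 < 2 - u := by linarith
      positivity

theorem nuFactor_pos (hν : 0 < ν) (ha : 0 < a) (hb : 0 ≤ b) (he : 0 ≤ e) :
    0 < nuFactor a b e ν := by
  unfold nuFactor
  positivity

/-- The numerator is `ν(ν+a)(ν+b)(ν+a+e)` times the logarithmic derivative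
`6/ν + 6/(ν+a+e) - 8/(ν+a) - 3/(ν+b)`, regrouped so that its sign is visible. -/
theorem hasDerivAt_nuFactor (ha : ν + a ≠ 0) (hb : ν + b ≠ 0) :
    HasDerivAt (nuFactor a b e)
      (ν^5 * (ν + a + e)^5 * ((ν + b) * (ν^2 + (4 * a - 5 * e) * ν + 3 * a * (a + e))
        + 3 * b * (ν + a) * (ν + a + e)) / ((ν + a)^9 * (ν + b)^4)) ν := by
  have hid := hasDerivAt_id' ν
  have h := ((hid.pow 6).mul (((hid.add_const a).add_const e).pow 6)).div
    (((hid.add_const a).pow 8).mul ((hid.add_const b).pow 3)) (by simp [ha, hb])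
  refine h.congr_deriv ?_
  simp only [Pi.pow_apply, Pi.mul_apply]
  field_simp
  ring

theorem nuFactor_strictMonoOn (ha : 0 < a) (hb : 0 ≤ b) (he : 0 ≤ e) (hea : 5 * e ≤ 4 * a) :
    StrictMonoOn (nuFactor a b e) (Ioi 0) :=
  strictMonoOn_of_hasDerivAt_pos (convex_Ioi 0)
    (fun x (hx : 0 < x) => hasDerivAt_nuFactor (by positivity) (by positivity))
    fun ν hν => by
      have hν : 0 < ν := by rwa [interior_Ioi] at hν
      have : 0 ≤ 4 * a - 5 * e := by linarith
      positivity

theorem denomA_pos (hν : 0 < ν) (hb : 0 ≤ b) (hae : 0 ≤ a + e) : 0 < denomA a b e ν := by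
  unfold denomA
  have : 0 < ν + a + e := by linarith
  positivity

theorem denomA_strictMonoOn (hb : 0 ≤ b) (hae : 0 ≤ a + e) :
    StrictMonoOn (denomA a b e) (Ioi 0) := by
  intro x (hx : 0 < x) y (hy : 0 < y) hxy
  unfold denomA
  have : 0 ≤ x + a + e := by linarith
  gcongr

end Factors

section Parameters

variable {E0 γ μ q ν : ℝ}

theorem epsPar_nonneg (E0 γ : ℝ) : 0 ≤ epsPar E0 γ := by
  have : E0 + 4 ≤ Real.sqrt ((E0 + 4)^2 + 4 * γ^2) :=
    Real.le_sqrt_of_sq_le (by nlinarith [sq_nonneg γ])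
  unfold epsPar
  linarith

theorem epsPar_sq_add_mul (E0 γ : ℝ) : epsPar E0 γ ^ 2 + (E0 + 4) * epsPar E0 γ = γ^2 := by
  have h : Real.sqrt ((E0 + 4)^2 + 4 * γ^2) ^ 2 = (E0 + 4)^2 + 4 * γ^2 :=
    Real.sq_sqrt (by positivity)
  unfold epsPar
  linear_combination h / 4

theorem aPar_pos (hE0 : 0 ≤ E0) (γ : ℝ) : 0 < aPar E0 γ := by
  unfold aPar
  linarith [epsPar_nonneg E0 γ]

theorem aPar_add_epsPar_pos (hE0 : 0 ≤ E0) (γ : ℝ) : 0 < aPar E0 γ + epsPar E0 γ := by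
  linarith [aPar_pos hE0 γ, epsPar_nonneg E0 γ]

theorem E1Par_nonneg (hE0 : 0 ≤ E0) (γ : ℝ) : 0 ≤ E1Par E0 γ :=
  add_nonneg hE0 (epsPar_nonneg E0 γ)

theorem EqA.one_sub_sq_mul_denomA (hE0 : 0 ≤ E0) (hν : 0 < ν) (hA : EqA E0 γ q ν) :
    (1 - q^2) * denomA (aPar E0 γ) (E1Par E0 γ) (epsPar E0 γ) ν = 12 * γ^4 := by
  have hD := denomA_pos hν (E1Par_nonneg hE0 γ) (aPar_add_epsPar_pos hE0 γ).le
  unfold denomA at hD ⊢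
  unfold EqA at hA
  rw [eq_div_iff hD.ne'] at hA
  linear_combination hA

theorem uFactor_mul_nuFactor_of_eqA_of_eqB (hE0 : 0 ≤ E0) (hγ : γ ≠ 0) (hν : 0 < ν)
    (hq : q ∈ Ioo (-1) 1) (hA : EqA E0 γ q ν) (hB : EqB E0 γ μ q ν) :
    uFactor (-q) * nuFactor (aPar E0 γ) (E1Par E0 γ) (epsPar E0 γ) ν
      = (54 * γ^2 * μ)^4 / (12 * γ^4)^3 := by
  have hA' := hA.one_sub_sq_mul_denomA hE0 hν
  unfold EqB at hB
  unfold denomA at hA'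
  have ha := aPar_pos hE0 γ
  have he := epsPar_nonneg E0 γ
  set a := aPar E0 γ
  set b := E1Par E0 γ
  set e := epsPar E0 γ
  have h1q : 0 < 1 + q := by linarith [hq.1]
  have h1q' : 0 < 1 - q := by linarith [hq.2]
  have hB' : (2 + q)^2 * (1 - q) * (ν^3 * (ν + a + e)^3 / (ν + a)^2) = 54 * γ^2 * μ := by
    field_simp at hB ⊢
    refine mul_left_cancel₀ (by positivity : 2 * γ^2 ≠ 0) ?_
    linear_combination (1 - q) * ν^2 * (ν + a + e)^2 * hB + 9 * μ * (ν + a)^2 * hA'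
  rw [← hA', ← hB', show 1 - q^2 = (1 - q) * (1 + q) by ring]
  unfold uFactor nuFactor
  simp only [sub_neg_eq_add, ← sub_eq_add_neg]
  field_simp

theorem EqA.eq_of_nonpos {q₁ q₂ : ℝ} (hA₁ : EqA E0 γ q₁ ν) (hA₂ : EqA E0 γ q₂ ν) (hq₁ : q₁ ≤ 0)
    (hq₂ : q₂ ≤ 0) : q₁ = q₂ := by
  have h : (1 - q₁) * (1 + q₁) = (1 - q₂) * (1 + q₂) := hA₁.trans hA₂.symm
  nlinarith

theorem not_lt_of_eqA_of_eqB (hE0 : 0 ≤ E0) (hγ : 0 < γ)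
    (hε : 5 * epsPar E0 γ ≤ 4 * aPar E0 γ) {q₁ ν₁ q₂ ν₂ : ℝ}
    (hν₁ : 0 < ν₁) (hq₁ : q₁ ∈ Ioc (-1) 0) (hA₁ : EqA E0 γ q₁ ν₁) (hB₁ : EqB E0 γ μ q₁ ν₁)
    (hν₂ : 0 < ν₂) (hq₂ : q₂ ∈ Ioc (-1) 0) (hA₂ : EqA E0 γ q₂ ν₂) (hB₂ : EqB E0 γ μ q₂ ν₂) :
    ¬ ν₁ < ν₂ := by
  intro hν
  obtain ⟨hq₁l, hq₁r⟩ := hq₁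
  obtain ⟨hq₂l, hq₂r⟩ := hq₂
  have ha := aPar_pos hE0 γ
  have hb := E1Par_nonneg hE0 γ
  have he := epsPar_nonneg E0 γ
  have hae := (aPar_add_epsPar_pos hE0 γ).le
  have hu : -q₁ < -q₂ := by
    have hD₁ := denomA_pos hν₁ hb hae
    have hD := denomA_strictMonoOn hb hae hν₁ hν₂ hν
    have hA₁' := hA₁.one_sub_sq_mul_denomA hE0 hν₁
    have hA₂' := hA₂.one_sub_sq_mul_denomA hE0 hν₂
    by_contra! h
    have hsq : q₂^2 ≤ q₁^2 := by nlinarith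
    have hpos : 0 < 1 - q₂^2 := by nlinarith
    nlinarith [mul_lt_mul_of_pos_left hD hpos]
  have hk := uFactor_strictMonoOn ⟨neg_nonneg.2 hq₁r, by linarith⟩
    ⟨neg_nonneg.2 hq₂r, by linarith⟩ hu
  have hR := nuFactor_strictMonoOn ha hb he hε hν₁ hν₂ hν
  have hlt := mul_lt_mul'' hk hR (uFactor_pos (by linarith) (by linarith)).le
    (nuFactor_pos hν₁ ha hb he).le
  rw [uFactor_mul_nuFactor_of_eqA_of_eqB hE0 hγ.ne' hν₁ ⟨hq₁l, by linarith⟩ hA₁ hB₁,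
    uFactor_mul_nuFactor_of_eqA_of_eqB hE0 hγ.ne' hν₂ ⟨hq₂l, by linarith⟩ hA₂ hB₂] at hlt
  exact hlt.false

end Parameters

theorem at_most_one_solution_nonpos_q_general
    (E0 C : ℝ) (hE0 : 0 < E0) :
    ∃ γ0 > 0, ∀ γ : ℝ, 0 < γ → γ < γ0 → ∀ μ : ℝ, 0 < μ → μ ≤ C * γ →
      {p : ℝ × ℝ | 0 < p.2 ∧ -1 < p.1 ∧ p.1 ≤ 0 ∧
        EqA E0 γ p.1 p.2 ∧ EqB E0 γ μ p.1 p.2}.encard ≤ 1 := by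
  refine ⟨1, one_pos, fun γ hγ hγ1 μ _ _ => ?_⟩
  have hε : 5 * epsPar E0 γ ≤ 4 * aPar E0 γ := by
    unfold aPar
    nlinarith [epsPar_sq_add_mul E0 γ, epsPar_nonneg E0 γ]
  rw [encard_le_one_iff_subsingleton]
  rintro ⟨q₁, ν₁⟩ ⟨hν₁, hq₁, hq₁', hA₁, hB₁⟩ ⟨q₂, ν₂⟩ ⟨hν₂, hq₂, hq₂', hA₂, hB₂⟩
  have h₁₂ := not_lt_of_eqA_of_eqB hE0.le hγ hε hν₁ ⟨hq₁, hq₁'⟩ hA₁ hB₁ hν₂ ⟨hq₂, hq₂'⟩ hA₂ hB₂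
  have h₂₁ := not_lt_of_eqA_of_eqB hE0.le hγ hε hν₂ ⟨hq₂, hq₂'⟩ hA₂ hB₂ hν₁ ⟨hq₁, hq₁'⟩ hA₁ hB₁
  obtain rfl : ν₁ = ν₂ := le_antisymm (not_lt.1 h₂₁) (not_lt.1 h₁₂)
  exact Prod.ext (hA₁.eq_of_nonpos hA₂ hq₁' hq₂') rfl

/-- for small `γ` and `μ ≤ Cγ`, the transition system (A)-(B) has at
most one solution `(q, ν)` with `ν > 0` and `-1 < q ≤ 0`. -/
theorem at_most_one_solution_nonpos_q
    (E0 C : ℝ) (hE0 : 0 < E0) (hC : 0 < C) :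
    ∃ γ0 > 0, ∀ γ : ℝ, 0 < γ → γ < γ0 → ∀ μ : ℝ, 0 < μ → μ ≤ C * γ →
      {p : ℝ × ℝ | 0 < p.2 ∧ -1 < p.1 ∧ p.1 ≤ 0 ∧
        EqA E0 γ p.1 p.2 ∧ EqB E0 γ μ p.1 p.2}.encard ≤ 1 :=
  at_most_one_solution_nonpos_q_general E0 C hE0
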